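/- arXiv:1605.03758 — 2 statements merged into one kernel-verified Lean document; each statement's English description precedes it below -/
import Mathlib

section
/- Let μ: G⁺ × G⁺ → ℂ be a complex-valued left weight on a countable directed graph G (μ(v,w) ≠ 0 iff wv ∈ G⁺, and μ satisfies the left cocycle condition), left-bounded in the sense that sup_v |μ(v,w)| < ∞ for all w. Let λ(v,w) = |μ(v,w)|, and define β(v,w) = λ(v,w)/μ(v,w) when wv ∈ G⁺ and β(v,w) = 1 otherwise. Then the unitary diagonal operator U_β on ℓ²(G⁺) given by U_β ξ_v = β(s(v), v) ξ_v satisfies U_β L_{μ,w} = L_{λ,w} U_β for all w ∈ G⁺; in particular L_{μ,w} = U_β* L_{λ,w} U_β. -/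
open scoped Classical

noncomputable section

/-- The set of all finite paths of a directed graph (quiver), including
vertices as paths of length `0`. -/
def PathIn (V : Type u) [Quiver.{w + 1} V] : Type (max u (w + 1)) :=
  Σ a b : V, Quiver.Path a b

namespace PathIn

variable {V : Type u} [Quiver.{w + 1} V]

/-- The source vertex `s(p)` of a path. -/
def src (p : PathIn V) : V := p.1

/-- The range vertex `r(p)` of a path. -/
def tgt (p : PathIn V) : V := p.2.1

/-- The length `|p|` of a path. -/
def length (p : PathIn V) : ℕ := p.2.2.length

/-- A vertex, regarded as a path of length `0`. -/
def ofVertex (x : V) : PathIn V := ⟨x, x, Quiver.Path.nil⟩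

/-- A path which is a single edge. -/
def IsEdge (p : PathIn V) : Prop := p.length = 1

/-- `Comp w v`: the product `wv` (first traverse `v`, then `w`) is a path,
i.e. `s(w) = r(v)`. -/
def Comp (w v : PathIn V) : Prop := w.src = v.tgt

/-- The product path `wv` (first traverse `v`, then `w`); junk value `w` if
not composable. -/
def mul (w v : PathIn V) : PathIn V :=
  if h : w.src = v.tgt then ⟨v.1, w.2.1, v.2.2.comp (w.2.2.cast h rfl)⟩ else w

end PathIn

variable {V : Type u} [Quiver.{w + 1} V]

/-- A left weight on the path semigroupoid of `G`: nonnegative, nonzero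
exactly on composable pairs, and satisfying the left cocycle condition. -/
def IsLeftWeight (l : PathIn V → PathIn V → ℝ) : Prop :=
  (∀ v w, 0 ≤ l v w) ∧
  (∀ v w, 0 < l v w ↔ PathIn.Comp w v) ∧
  (∀ v w₁ w₂, PathIn.Comp w₁ v → PathIn.Comp w₂ w₁ →
    l v (PathIn.mul w₂ w₁) = l (PathIn.mul w₁ v) w₂ * l v w₁)

/-- A right weight on the path semigroupoid of `G`. -/
def IsRightWeight (r : PathIn V → PathIn V → ℝ) : Prop :=
  (∀ v u, 0 ≤ r v u) ∧
  (∀ v u, 0 < r v u ↔ PathIn.Comp v u) ∧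
  (∀ v u₁ u₂, PathIn.Comp v u₁ → PathIn.Comp u₁ u₂ →
    r v (PathIn.mul u₁ u₂) = r (PathIn.mul v u₁) u₂ * r v u₁)

/-- A path weight: strictly positive, equal to `1` on vertices. -/
def IsPathWeight (α : PathIn V → ℝ) : Prop :=
  (∀ p, 0 < α p) ∧ (∀ x : V, α (PathIn.ofVertex x) = 1)

/-- The left weight `λ_α` associated with a path weight `α`. -/
def leftOf (α : PathIn V → ℝ) (v w : PathIn V) : ℝ :=
  if PathIn.Comp w v then α (PathIn.mul w v) / α v else 0

/-- The right weight `ρ_α` associated with a path weight `α`. -/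
def rightOf (α : PathIn V → ℝ) (v u : PathIn V) : ℝ :=
  if PathIn.Comp v u then α (PathIn.mul v u) / α v else 0

/-- The path weight `α_λ` associated with a left weight: `α_λ(v) = λ(s(v),v)`. -/
def pwOf (l : PathIn V → PathIn V → ℝ) (v : PathIn V) : ℝ :=
  l (PathIn.ofVertex v.src) v

/-- `λ` is left-bounded at `w`, i.e. `λ(w) = sup_v λ(v,w) < ∞`. -/
def LeftBddAt (l : PathIn V → PathIn V → ℝ) (w : PathIn V) : Prop :=
  BddAbove (Set.range fun v => l v w)

/-- `λ` is left-bounded. -/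
def LeftBdd (l : PathIn V → PathIn V → ℝ) : Prop := ∀ w, LeftBddAt l w

/-- `ρ` is right-bounded at `u`, i.e. `ρ(u) = sup_v ρ(v,u) < ∞`. -/
def RightBddAt (r : PathIn V → PathIn V → ℝ) (u : PathIn V) : Prop :=
  BddAbove (Set.range fun v => r v u)

/-- `ρ` is right-bounded. -/
def RightBdd (r : PathIn V → PathIn V → ℝ) : Prop := ∀ u, RightBddAt r u

/-- `ρ` is a right companion to `λ`: it is a right weight and the pair
`(λ, ρ)` satisfies the commuting square condition at every `(w, u)`. -/
def IsRightCompanion (l r : PathIn V → PathIn V → ℝ) : Prop :=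
  IsRightWeight r ∧
  ∀ w u v, PathIn.Comp w v → PathIn.Comp v u →
    r (PathIn.mul w v) u * l v w = l (PathIn.mul v u) w * r v u

/-- The Fock space `H_G = ℓ²(G⁺)` of the graph. -/
abbrev FockSpace (V : Type u) [Quiver.{w + 1} V] : Type _ := lp (fun _ : PathIn V => ℂ) 2

/-- The canonical orthonormal basis vector `ξ_v` of the Fock space. -/
def xi (v : PathIn V) : FockSpace V := lp.single 2 v 1

end

/-- A complex-valued left weight. -/
def IsComplexLeftWeight {V : Type u} [Quiver.{w + 1} V]
    (m : PathIn V → PathIn V → ℂ) : Prop :=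
  (∀ v w, m v w ≠ 0 ↔ PathIn.Comp w v) ∧
  (∀ v w₁ w₂, PathIn.Comp w₁ v → PathIn.Comp w₂ w₁ →
    m v (PathIn.mul w₂ w₁) = m (PathIn.mul w₁ v) w₂ * m v w₁)

/-- The unimodular function `β(v,w) = λ(v,w)/μ(v,w)` (and `1` off composable pairs). -/
noncomputable def betaOf {V : Type u} [Quiver.{w + 1} V]
    (m : PathIn V → PathIn V → ℂ) (v w : PathIn V) : ℂ :=
  if PathIn.Comp w v then ((‖m v w‖ : ℝ) : ℂ) / m v w else 1


section Aux

variable {V : Type u} [Quiver.{w + 1} V]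

lemma comp_ofVertex_src (v : PathIn V) : PathIn.Comp v (PathIn.ofVertex v.src) := rfl

lemma mul_ofVertex_src (v : PathIn V) : PathIn.mul v (PathIn.ofVertex v.src) = v := by
  obtain ⟨a, b, p⟩ := v
  simp [PathIn.mul, PathIn.ofVertex, PathIn.src, PathIn.tgt]
  rfl

lemma src_mul {w v : PathIn V} (h : PathIn.Comp w v) :
    (PathIn.mul w v).src = v.src := by
  simp [PathIn.mul, h, PathIn.Comp] at *
  have e : PathIn.mul w v = ⟨v.1, w.2.1, v.2.2.comp (w.2.2.cast h rfl)⟩ := dif_pos h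
  have e2 := congrArg PathIn.src e
  exact e2

lemma conj_mul_self_betaOf (m : PathIn V → PathIn V → ℂ)
    {v w : PathIn V} (hc : PathIn.Comp w v) (h : m v w ≠ 0) :
    (starRingEnd ℂ) (betaOf m v w) * betaOf m v w = 1 := by
  rw [betaOf, if_pos hc]
  set c := m v w with hcdef
  have habs : ((‖c‖ : ℝ) : ℂ) ≠ 0 := by
    simpa using norm_ne_zero_iff.mpr h
  rw [map_div₀, Complex.conj_ofReal]
  rw [div_mul_div_comm, ← Complex.normSq_eq_conj_mul_self]
  rw [Complex.normSq_eq_norm_sq, pow_two, Complex.ofReal_mul]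
  exact div_self (mul_ne_zero habs habs)

lemma clm_ext_xi [Countable V] [∀ a b : V, Countable (a ⟶ b)]
    (T S : FockSpace V →L[ℂ] FockSpace V)
    (h : ∀ v : PathIn V, T (xi v) = S (xi v)) : T = S := by
  refine ContinuousLinearMap.ext fun f => ?_
  have hs : HasSum (fun i : PathIn V => lp.single 2 i (f i)) f :=
    lp.hasSum_single ENNReal.ofNat_ne_top f
  have key : ∀ i : PathIn V, lp.single 2 i (f i) = f i • xi i := by
    intro i
    rw [xi, ← lp.single_smul]
    norm_num
  have hT : HasSum (fun i : PathIn V => T (lp.single 2 i (f i))) (T f) := hs.mapL T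
  have hS : HasSum (fun i : PathIn V => S (lp.single 2 i (f i))) (S f) := hs.mapL S
  refine hT.unique ?_
  convert hS using 2 with i
  rw [key i, map_smul, map_smul, h]

end Aux

/-- complex-weighted shifts are jointly unitarily equivalent to
the shifts for the absolute-value weight, via the diagonal unitary `U_β`. -/
theorem complex_weight_unitarily_equivalent {V : Type u} [Quiver.{w + 1} V] [Countable V] [∀ a b : V, Countable (a ⟶ b)]
    (m : PathIn V → PathIn V → ℂ) (hm : IsComplexLeftWeight m)
    (hb : ∀ w : PathIn V, BddAbove (Set.range fun v => ‖m v w‖))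
    (U : FockSpace V →L[ℂ] FockSpace V)
    (hU : ∀ v : PathIn V,
      U (xi v) = betaOf m (PathIn.ofVertex v.src) v • xi v)
    (Lm Ll : PathIn V → FockSpace V →L[ℂ] FockSpace V)
    (hLm : ∀ w v : PathIn V, Lm w (xi v) =
      if PathIn.Comp w v then m v w • xi (PathIn.mul w v) else 0)
    (hLl : ∀ w v : PathIn V, Ll w (xi v) =
      if PathIn.Comp w v then ((‖m v w‖ : ℝ) : ℂ) • xi (PathIn.mul w v) else 0)
    (w : PathIn V) :
    U.comp (Lm w) = (Ll w).comp U ∧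
    Lm w = ((ContinuousLinearMap.adjoint U).comp (Ll w)).comp U := by
  have coord : ∀ (f : FockSpace V) (q : PathIn V),
      inner (𝕜 := ℂ) (xi q) f = f q := by
    intro f q
    rw [xi, lp.inner_single_left]
    simp
  have hfirst : U.comp (Lm w) = (Ll w).comp U := by
    apply clm_ext_xi
    intro v
    simp only [ContinuousLinearMap.comp_apply, hLm w v, hU v]
    by_cases h : PathIn.Comp w v
    · rw [if_pos h, map_smul, hU (PathIn.mul w v), map_smul, hLl, if_pos h,
        smul_smul, smul_smul]
      congr 1
      -- scalar identity
      have hsrc : (PathIn.mul w v).src = v.src := src_mul h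
      rw [hsrc]
      set x := PathIn.ofVertex v.src with hx
      have hcx : PathIn.Comp v x := comp_ofVertex_src v
      have hcomp2 : PathIn.Comp (PathIn.mul w v) x := by
        show (PathIn.mul w v).src = x.tgt
        rw [hsrc]; rfl
      have hcoc := hm.2 x v w hcx h
      rw [mul_ofVertex_src] at hcoc
      have ha : m v w ≠ 0 := (hm.1 v w).mpr h
      have hb : m x v ≠ 0 := (hm.1 x v).mpr hcx
      rw [betaOf, if_pos hcomp2, betaOf, if_pos hcx, hcoc, norm_mul]
      push_cast
      field_simp
    · rw [if_neg h, map_zero, map_smul, hLl, if_neg h, smul_zero]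
  have hUU : ∀ p : PathIn V, (ContinuousLinearMap.adjoint U) (U (xi p)) = xi p := by
    intro p
    refine lp.ext (funext fun q => ?_)
    rw [← coord, ← coord, ContinuousLinearMap.adjoint_inner_right, hU p, hU q,
      inner_smul_left, inner_smul_right]
    by_cases hq : q = p
    · subst hq
      rw [← mul_assoc, conj_mul_self_betaOf m (comp_ofVertex_src q)
        ((hm.1 _ _).mpr (comp_ofVertex_src q)), one_mul]
    · have h0 : inner (𝕜 := ℂ) (xi q) (xi p) = 0 := by
        rw [coord, xi, lp.single_apply, Pi.single_eq_of_ne hq]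
      rw [h0, mul_zero, mul_zero]
  refine ⟨hfirst, ?_⟩
  apply clm_ext_xi
  intro v
  have hLU : (Ll w) (U (xi v)) = U ((Lm w) (xi v)) := by
    have := congrArg (fun T : FockSpace V →L[ℂ] FockSpace V => T (xi v)) hfirst
    simpa using this.symm
  simp only [ContinuousLinearMap.comp_apply, hLU, hLm w v]
  by_cases h : PathIn.Comp w v
  · rw [if_pos h, map_smul, map_smul, hUU]
  · rw [if_neg h, map_zero, map_zero]
end

section
/- Let λ be a left weight on a countable directed graph G, and suppose ρ₁ and ρ₂ are both right companions to λ (i.e. each satisfies the commuting square condition with λ at every pair of paths). Define q(u) = ρ₂(r(u), u)/ρ₁(r(u), u) for u ∈ G⁺. Then ρ₂(w,u) = q(u)·ρ₁(w,u) for all w, u with wu ∈ G⁺, and q is multiplicative: q(u₁u₂) = q(u₁)q(u₂) whenever u₁u₂ ∈ G⁺. -/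
open scoped Classical

section Aux
variable {V : Type u} [Quiver.{w + 1} V]

lemma PathIn.tgt_mul (w v : PathIn V) (h : PathIn.Comp w v) :
    (PathIn.mul w v).tgt = w.tgt := by
  have h' : w.src = v.tgt := h
  exact (congrArg PathIn.tgt (dif_pos h' : PathIn.mul w v = _)).trans rfl

lemma PathIn.mul_ofVertex (w : PathIn V) :
    PathIn.mul w (PathIn.ofVertex w.src) = w := by
  obtain ⟨a, b, p⟩ := w
  simp [PathIn.mul, PathIn.ofVertex, PathIn.src, PathIn.tgt, Quiver.Path.cast]
  rfl

lemma PathIn.ofVertex_mul (u : PathIn V) :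
    PathIn.mul (PathIn.ofVertex u.tgt) u = u := by
  obtain ⟨a, b, p⟩ := u
  simp [PathIn.mul, PathIn.ofVertex, PathIn.src, PathIn.tgt, Quiver.Path.cast]
  rfl

lemma PathIn.comp_ofVertex_tgt (u : PathIn V) :
    PathIn.Comp (PathIn.ofVertex u.tgt) u := rfl

end Aux

/-- two right companions of a left weight differ by a
multiplicative factor `q(u)`. -/
theorem right_companions_proportional {V : Type u} [Quiver.{w + 1} V] [Countable V] [∀ a b : V, Countable (a ⟶ b)]
    (l r₁ r₂ : PathIn V → PathIn V → ℝ) (hl : IsLeftWeight l)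
    (h₁ : IsRightCompanion l r₁) (h₂ : IsRightCompanion l r₂)
    (q : PathIn V → ℝ)
    (hq : ∀ u : PathIn V,
      q u = r₂ (PathIn.ofVertex u.tgt) u / r₁ (PathIn.ofVertex u.tgt) u) :
    (∀ w u : PathIn V, PathIn.Comp w u → r₂ w u = q u * r₁ w u) ∧
    (∀ u₁ u₂ : PathIn V, PathIn.Comp u₁ u₂ →
      q (PathIn.mul u₁ u₂) = q u₁ * q u₂) := by
  obtain ⟨hl_nonneg, hl_pos, hl_cocycle⟩ := hl
  obtain ⟨⟨hr₁n, hr₁p, hr₁c⟩, hc₁⟩ := h₁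
  obtain ⟨⟨hr₂n, hr₂p, hr₂c⟩, hc₂⟩ := h₂
  have key : ∀ w u : PathIn V, PathIn.Comp w u → r₂ w u = q u * r₁ w u := by
    intro w u hwu
    set e := PathIn.ofVertex u.tgt with he
    have heu : PathIn.Comp e u := PathIn.comp_ofVertex_tgt u
    have hwe : PathIn.Comp w e := hwu
    have hsrc : w.src = u.tgt := hwu
    have hmwe : PathIn.mul w e = w := by
      rw [he, ← hsrc]; exact PathIn.mul_ofVertex w
    have hmeu : PathIn.mul e u = u := PathIn.ofVertex_mul u
    have E1 := hc₁ w u e hwe heu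
    have E2 := hc₂ w u e hwe heu
    rw [hmwe, hmeu] at E1 E2
    have hle : 0 < l e w := (hl_pos e w).mpr hwe
    have hr1e : 0 < r₁ e u := (hr₁p e u).mpr heu
    rw [hq u, ← he, div_mul_eq_mul_div, eq_div_iff (ne_of_gt hr1e)]
    have H : r₂ w u * r₁ e u * l e w = r₂ e u * r₁ w u * l e w := by
      linear_combination (r₁ e u) * E2 - (r₂ e u) * E1
    exact mul_right_cancel₀ (ne_of_gt hle) H
  refine ⟨key, ?_⟩
  intro u₁ u₂ h12
  set e := PathIn.ofVertex u₁.tgt with he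
  have he1 : PathIn.Comp e u₁ := PathIn.comp_ofVertex_tgt u₁
  have hmeu : PathIn.mul e u₁ = u₁ := PathIn.ofVertex_mul u₁
  have htm : (PathIn.mul u₁ u₂).tgt = u₁.tgt := PathIn.tgt_mul u₁ u₂ h12
  have C1 := hr₁c e u₁ u₂ he1 h12
  have C2 := hr₂c e u₁ u₂ he1 h12
  rw [hmeu] at C1 C2
  have hr1 : (r₁ u₁ u₂) ≠ 0 := ne_of_gt ((hr₁p u₁ u₂).mpr h12)
  have hre : (r₁ e u₁) ≠ 0 := ne_of_gt ((hr₁p e u₁).mpr he1)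
  have h2eq : r₂ u₁ u₂ = q u₂ * r₁ u₁ u₂ := key u₁ u₂ h12
  have h2eq' : r₂ e u₁ = q u₁ * r₁ e u₁ := key e u₁ he1
  rw [hq (PathIn.mul u₁ u₂), htm, ← he, C1, C2, h2eq, h2eq']
  field_simp
end
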